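/- arXiv:1206.5866 — 3 statements merged into one kernel-verified Lean document; each statement's English description precedes it below -/
import Mathlib

section
/- Let $f\colon[0,T]\to\mathbb{R}$ be a bounded measurable function and define $R(s,t) := \int_0^{\min\{s,t\}} f(r)^2\,dr$ (the covariance of the Wiener integral $X_t = \int_0^t f\,dB$). Then $R$ has finite 2D $1$-variation on $[0,T]^2$, bounded by $\int_0^T f(r)^2\,dr$. -/
open Finset Set

noncomputable def rinc (f : ℝ → ℝ → ℝ) (a b c d : ℝ) : ℝ :=
  f b d - f a d - f b c + f a c

def IsDissection (a b : ℝ) (n : ℕ) (u : ℕ → ℝ) : Prop :=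
  u 0 = a ∧ u n = b ∧ ∀ i < n, u i < u (i + 1)

noncomputable def varSums (p : ℝ) (f : ℝ → ℝ → ℝ) (s t u v : ℝ) : Set ℝ :=
  { S | ∃ (n m : ℕ) (a b : ℕ → ℝ), IsDissection s t n a ∧ IsDissection u v m b ∧
      S = ∑ i ∈ range n, ∑ j ∈ range m,
            |rinc f (a i) (a (i + 1)) (b j) (b (j + 1))| ^ p }

noncomputable def V2D (p : ℝ) (f : ℝ → ℝ → ℝ) (s t u v : ℝ) : ℝ :=
  sSup (varSums p f s t u v) ^ (1 / p)

lemma diss_mono {a b : ℝ} {n : ℕ} {u : ℕ → ℝ} (h : IsDissection a b n u) :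
    ∀ i j, i ≤ j → j ≤ n → u i ≤ u j := by
  intro i j hij hjn
  induction j with
  | zero => simp_all
  | succ k ih =>
    rcases Nat.eq_or_lt_of_le hij with rfl | hlt
    · exact le_refl _
    · exact le_trans (ih (Nat.lt_succ_iff.mp hlt) (le_trans (Nat.le_succ k) hjn))
        (le_of_lt (h.2.2 k (by omega)))

/-- The covariance `R(s,t) = ∫_0^{min s t} f(r)² dr` of a Wiener integral has
finite 2D 1-variation on `[0,T]²`, bounded by `∫_0^T f(r)² dr`. -/
theorem wiener_integral_covariance_one_variation
    (T : ℝ) (hT : 0 ≤ T) (f : ℝ → ℝ) (hmeas : Measurable f)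
    (hbdd : ∃ M : ℝ, ∀ r ∈ Icc 0 T, |f r| ≤ M)
    (R : ℝ → ℝ → ℝ)
    (hR : ∀ a b : ℝ, R a b = ∫ r in (0 : ℝ)..(min a b), (f r) ^ 2) :
    BddAbove (varSums 1 R 0 T 0 T) ∧
    V2D 1 R 0 T 0 T ≤ ∫ r in (0 : ℝ)..T, (f r) ^ 2 := by
  obtain ⟨M, hM⟩ := hbdd
  set F : ℝ → ℝ := fun x => ∫ r in (0 : ℝ)..x, (f r) ^ 2 with hF
  -- integrability of f² on Icc 0 T
  have hint : MeasureTheory.IntegrableOn (fun r => (f r) ^ 2) (Icc (0:ℝ) T) := by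
    refine MeasureTheory.Measure.integrableOn_of_bounded (M := M ^ 2)
      (measure_Icc_lt_top).ne ((hmeas.pow_const 2).aestronglyMeasurable) ?_
    rw [MeasureTheory.ae_restrict_iff' measurableSet_Icc]
    filter_upwards with r hr
    have h1 : |f r| ≤ M := hM r hr
    have h2 : 0 ≤ |f r| := abs_nonneg _
    rw [Real.norm_eq_abs, abs_pow]
    exact pow_le_pow_left₀ h2 h1 2
  have hii : ∀ x y : ℝ, 0 ≤ x → x ≤ y → y ≤ T → IntervalIntegrable (fun r => (f r) ^ 2)
      MeasureTheory.volume x y := by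
    intro x y hx hxy hy
    apply MeasureTheory.IntegrableOn.intervalIntegrable
    apply hint.mono_set
    intro r hr
    rw [uIcc_of_le hxy] at hr
    exact ⟨le_trans hx hr.1, le_trans hr.2 hy⟩
  have hFmono : ∀ x y : ℝ, 0 ≤ x → x ≤ y → y ≤ T → F x ≤ F y := by
    intro x y hx hxy hyT
    have h1 : IntervalIntegrable (fun r => (f r) ^ 2) MeasureTheory.volume 0 x :=
      hii 0 x le_rfl hx (le_trans hxy hyT)
    have h2 : IntervalIntegrable (fun r => (f r) ^ 2) MeasureTheory.volume x y :=
      hii x y hx hxy hyT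
    have hadd := intervalIntegral.integral_add_adjacent_intervals h1 h2
    have hpos : 0 ≤ ∫ r in x..y, (f r) ^ 2 :=
      intervalIntegral.integral_nonneg hxy (fun u _ => sq_nonneg _)
    simp only [hF]
    linarith [hadd]
  -- every element of varSums equals F T
  have key : ∀ S ∈ varSums 1 R 0 T 0 T, S = F T := by
    rintro S ⟨n, m, a, b, ha, hb, rfl⟩
    have ha0 : a 0 = 0 := ha.1
    have han : a n = T := ha.2.1
    have hb0 : b 0 = 0 := hb.1
    have hbm : b m = T := hb.2.1
    have haIcc : ∀ i ≤ n, 0 ≤ a i ∧ a i ≤ T := fun i hi =>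
      ⟨ha0 ▸ diss_mono ha 0 i (Nat.zero_le _) hi, han ▸ diss_mono ha i n hi le_rfl⟩
    have hbIcc : ∀ j ≤ m, 0 ≤ b j ∧ b j ≤ T := fun j hj =>
      ⟨hb0 ▸ diss_mono hb 0 j (Nat.zero_le _) hj, hbm ▸ diss_mono hb j m hj le_rfl⟩
    -- each rinc term is nonnegative
    have hnn : ∀ i < n, ∀ j < m,
        0 ≤ rinc R (a i) (a (i + 1)) (b j) (b (j + 1)) := by
      intro i hi j hj
      set x := a i; set y := a (i+1); set c := b j; set d := b (j+1)
      have hxy : x ≤ y := le_of_lt (ha.2.2 i hi)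
      have hcd : c ≤ d := le_of_lt (hb.2.2 j hj)
      have hx := haIcc i (le_of_lt hi)
      have hy := haIcc (i+1) hi
      have hc := hbIcc j (le_of_lt hj)
      have hd := hbIcc (j+1) hj
      have hRmin : ∀ u v : ℝ, R u v = F (min u v) := fun u v => hR u v
      simp only [rinc, hRmin]
      rcases le_total x c with h | h
      · have e1 : min x d = x := min_eq_left (le_trans h hcd)
        have e2 : min x c = x := min_eq_left h
        rw [e1, e2]
        have : F (min y c) ≤ F (min y d) := by
          apply hFmono
          · exact le_min hy.1 hc.1
          · exact min_le_min le_rfl hcd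
          · exact le_trans (min_le_left _ _) hy.2
        linarith
      · have e1 : min y c = c := min_eq_right (le_trans h hxy)
        have e2 : min x c = c := min_eq_right h
        rw [e1, e2]
        have : F (min x d) ≤ F (min y d) := by
          apply hFmono
          · exact le_min hx.1 hd.1
          · exact min_le_min hxy le_rfl
          · exact le_trans (min_le_left _ _) hy.2
        linarith
    -- drop absolute values and the exponent 1
    have step1 : (∑ i ∈ range n, ∑ j ∈ range m,
          |rinc R (a i) (a (i + 1)) (b j) (b (j + 1))| ^ (1:ℝ))
        = ∑ i ∈ range n, ∑ j ∈ range m,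
            rinc R (a i) (a (i + 1)) (b j) (b (j + 1)) := by
      apply Finset.sum_congr rfl
      intro i hi
      apply Finset.sum_congr rfl
      intro j hj
      rw [Real.rpow_one, abs_of_nonneg (hnn i (mem_range.mp hi) j (mem_range.mp hj))]
    -- telescoping
    have inner : ∀ x y : ℝ, ∑ j ∈ range m, rinc R x y (b j) (b (j+1))
        = rinc R x y (b 0) (b m) := by
      intro x y
      have h1 : ∑ j ∈ range m, rinc R x y (b j) (b (j+1))
          = ∑ j ∈ range m, ((fun j => R y (b j) - R x (b j)) (j+1)
              - (fun j => R y (b j) - R x (b j)) j) := by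
        apply Finset.sum_congr rfl
        intro j _
        simp only [rinc]; ring
      rw [h1, Finset.sum_range_sub (fun j => R y (b j) - R x (b j)) m]
      simp only [rinc]; ring
    have outer : ∑ i ∈ range n, rinc R (a i) (a (i+1)) (b 0) (b m)
        = rinc R (a 0) (a n) (b 0) (b m) := by
      have h1 : ∑ i ∈ range n, rinc R (a i) (a (i+1)) (b 0) (b m)
          = ∑ i ∈ range n, ((fun i => R (a i) (b m) - R (a i) (b 0)) (i+1)
              - (fun i => R (a i) (b m) - R (a i) (b 0)) i) := by
        apply Finset.sum_congr rfl
        intro i _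
        simp only [rinc]; ring
      rw [h1, Finset.sum_range_sub (fun i => R (a i) (b m) - R (a i) (b 0)) n]
      simp only [rinc]; ring
    rw [step1]
    simp only [inner]
    rw [outer, ha0, han, hb0, hbm]
    have hF0 : F 0 = 0 := by simp [hF]
    simp only [rinc, hR, min_self, min_eq_left hT, min_eq_right hT]
    simp only [hF] at hF0 ⊢
    rw [hF0]
    ring
  have hFT0 : 0 ≤ F T := intervalIntegral.integral_nonneg hT (fun u _ => sq_nonneg _)
  constructor
  · exact ⟨F T, fun S hS => le_of_eq (key S hS)⟩
  · rw [V2D]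
    have h11 : (1:ℝ)/1 = 1 := by norm_num
    rw [h11, Real.rpow_one]
    exact Real.sSup_le (fun S hS => le_of_eq (key S hS)) hFT0
end

section
/- (Dyadic partition lemma.) Let $0\leq s < t \leq 1$ be dyadic rationals and let $m\in\mathbb{N}$ be such that $2^{-(m+1)} < t-s \leq 2^{-m}$. Then there exists a finite partition $s = \tau_0 < \tau_1 < \cdots < \tau_N = t$ of $[s,t)$ such that each interval $[\tau_i,\tau_{i+1})$ is a dyadic interval of the form $[l 2^{-k},(l+1)2^{-k})$ for some $k\geq m+1$ and integer $l$, and for each fixed $k\geq m+1$ at most two of the intervals $[\tau_i,\tau_{i+1})$ have length $2^{-k}$. -/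
open Finset

set_option linter.all false
set_option maxHeartbeats 1000000


private lemma pow2_inj {a b : ℕ} (h : (2:ℕ)^a = 2^b) : a = b :=
  Nat.pow_right_injective le_rfl h

private lemma mono_of_step (σ : ℕ → ℕ) (N : ℕ)
    (h : ∀ i < N, σ i ≤ σ (i+1)) :
    ∀ i j, i ≤ j → j ≤ N → σ i ≤ σ j := by
  intro i j hij hjN
  induction j with
  | zero => have : i = 0 := by omega
            simp [this]
  | succ j ihj =>
      rcases Nat.eq_or_lt_of_le hij with rfl | hlt
      · exact le_rfl
      · exact (ihj (by omega) (by omega)).trans (h j (by omega))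

private lemma dyadicCore (d : ℕ) : ∀ (q c : ℕ), d < 2^q → 2^q ∣ c →
    ∃ (N : ℕ) (σ : ℕ → ℕ), σ 0 = c ∧ σ N = c + d ∧ (N = 0 → d = 0) ∧
      (∀ i < N, ∃ j, j < q ∧ 2^j ∣ σ i ∧ σ (i+1) = σ i + 2^j) ∧
      (∀ i1 i2, i1 < i2 → i2 < N → σ (i2+1) - σ i2 < σ (i1+1) - σ i1) := by
  induction d using Nat.strong_induction_on with
  | _ d ih =>
  intro q c hd hc
  rcases Nat.eq_zero_or_pos d with h0 | hpos
  · subst h0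
    refine ⟨0, fun _ => c, rfl, by simp, fun _ => rfl, ?_, ?_⟩
    · intro i hi; exact absurd hi (Nat.not_lt_zero i)
    · intro i1 i2 _ h2; exact absurd h2 (Nat.not_lt_zero i2)
  · set j := Nat.log 2 d with hjdef
    have h2j : 2^j ≤ d := Nat.pow_log_le_self 2 hpos.ne'
    have hd2 : d < 2^(j+1) := Nat.lt_pow_succ_log_self (by norm_num) d
    have hjq : j < q := by
      have : (2:ℕ)^j < 2^q := lt_of_le_of_lt h2j hd
      exact (Nat.pow_lt_pow_iff_right (by norm_num)).mp this
    have hjc : 2^j ∣ c := (pow_dvd_pow 2 hjq.le).trans hc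
    have hc' : 2^j ∣ c + 2^j := Nat.dvd_add hjc dvd_rfl
    obtain ⟨N', σ', hσ0, hσN, hN0, hstep, hanti⟩ :=
      ih (d - 2^j) (by omega) j (c + 2^j) (by omega) hc'
    set σn : ℕ → ℕ := fun i => if i = 0 then c else σ' (i - 1) with hσn
    have hv0 : σn 0 = c := by simp [hσn]
    have hvs : ∀ i, σn (i + 1) = σ' i := by intro i; simp [hσn]
    refine ⟨N' + 1, σn, hv0, ?_, ?_, ?_, ?_⟩
    · rw [hvs, hσN]; omega
    · intro h; exact absurd h (Nat.succ_ne_zero N')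
    · intro i hi
      rcases Nat.eq_zero_or_pos i with rfl | hipos
      · exact ⟨j, hjq, by rw [hv0]; exact hjc, by rw [hv0, hvs, hσ0]⟩
      · obtain ⟨j', hj', hdvd', heq'⟩ := hstep (i - 1) (by omega)
        have ei : i = (i - 1) + 1 := by omega
        refine ⟨j', hj'.trans hjq, ?_, ?_⟩
        · rw [ei, hvs]; exact hdvd'
        · rw [ei, hvs, hvs]; exact heq'
    · intro i1 i2 h12 h2
      obtain ⟨j2, hj2, _, heq2⟩ := hstep (i2 - 1) (by omega)
      have e2 : i2 = (i2 - 1) + 1 := by omega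
      rcases Nat.eq_zero_or_pos i1 with rfl | h1pos
      · rw [e2, hvs, hvs, hv0, hvs, hσ0, heq2]
        have : (2:ℕ)^j2 < 2^j := Nat.pow_lt_pow_right (by norm_num) hj2
        omega
      · have e1 : i1 = (i1 - 1) + 1 := by omega
        rw [e2, hvs, hvs, e1, hvs, hvs]
        exact hanti (i1 - 1) (i2 - 1) (by omega) (by omega)

private lemma dyadicCoreL (d q a : ℕ) (hd : d < 2^q) (hdvd : 2^q ∣ (a + d)) :
    ∃ (N : ℕ) (σ : ℕ → ℕ), σ 0 = a ∧ σ N = a + d ∧ (N = 0 → d = 0) ∧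
      (∀ i < N, ∃ j, j < q ∧ 2^j ∣ σ i ∧ σ (i+1) = σ i + 2^j) ∧
      (∀ i1 i2, i1 < i2 → i2 < N → σ (i1+1) - σ i1 < σ (i2+1) - σ i2) := by
  obtain ⟨N, σ', hL0, hLN, hLnil, hLstep, hLanti⟩ := dyadicCore d q (a + d) hd hdvd
  have hLmono : ∀ x y, x ≤ y → y ≤ N → σ' x ≤ σ' y :=
    mono_of_step σ' N (fun i hi => by obtain ⟨j, _, _, hq⟩ := hLstep i hi; omega)
  have hLlow : ∀ x, x ≤ N → a + d ≤ σ' x := by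
    intro x hx; have := hLmono 0 x (Nat.zero_le x) hx; omega
  have hLhigh : ∀ x, x ≤ N → σ' x ≤ a + d + d := by
    intro x hx; have := hLmono x N hx le_rfl; omega
  refine ⟨N, fun i => 2 * (a + d) - σ' (N - i), ?_, ?_, hLnil, ?_, ?_⟩
  · simp only [Nat.sub_zero]; rw [hLN]; omega
  · simp only [Nat.sub_self]; rw [hL0]; omega
  · intro i hi
    obtain ⟨j, hj, hdvd', heq⟩ := hLstep (N - 1 - i) (by omega)
    have hx1 : N - i = (N - 1 - i) + 1 := by omega
    have hb1 : σ' ((N - 1 - i) + 1) ≤ a + d + d := hLhigh _ (by omega)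
    have hb3 : σ' (N - 1 - i) + 2^j ≤ a + d + d := by rw [← heq]; exact hb1
    refine ⟨j, hj, ?_, ?_⟩
    · show (2:ℕ)^j ∣ 2 * (a + d) - σ' (N - i)
      have hrw : 2 * (a + d) - σ' (N - i) = 2 * (a + d) - (σ' (N - 1 - i) + 2^j) := by
        rw [hx1, heq]
      rw [hrw]
      refine Nat.dvd_sub ?_ (Nat.dvd_add hdvd' dvd_rfl)
      exact Dvd.dvd.mul_left ((pow_dvd_pow 2 hj.le).trans hdvd) 2
    · show 2 * (a + d) - σ' (N - (i+1)) = 2 * (a + d) - σ' (N - i) + 2 ^ j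
      have hNi : N - (i+1) = N - 1 - i := by omega
      rw [hNi, hx1, heq]
      omega
  · intro i1 i2 h12 h2
    have key : ∀ i, i < N →
        2 * (a + d) - σ' (N - (i+1)) - (2 * (a + d) - σ' (N - i))
          = σ' (N - i) - σ' (N - 1 - i) := by
      intro i hi
      have hx1 : N - i = (N - 1 - i) + 1 := by omega
      have hNi : N - (i+1) = N - 1 - i := by omega
      have hb1 : σ' (N - i) ≤ a + d + d := hLhigh _ (by omega)
      have hb2 : σ' (N - 1 - i) ≤ σ' (N - i) := hLmono _ _ (by omega) (by omega)
      rw [hNi]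
      omega
    show 2 * (a + d) - σ' (N - (i1+1)) - (2 * (a + d) - σ' (N - i1))
      < 2 * (a + d) - σ' (N - (i2+1)) - (2 * (a + d) - σ' (N - i2))
    rw [key i1 (by omega), key i2 h2]
    have h' := hLanti (N - 1 - i2) (N - 1 - i1) (by omega) (by omega)
    have e1 : N - 1 - i1 + 1 = N - i1 := by omega
    have e2 : N - 1 - i2 + 1 = N - i2 := by omega
    rw [e1, e2] at h'
    exact h'

private lemma natPartition (a b p : ℕ) (h1 : 2^p < b - a) (h2 : b - a ≤ 2^(p+1)) :
    ∃ (N : ℕ) (σ : ℕ → ℕ), 0 < N ∧ σ 0 = a ∧ σ N = b ∧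
      (∀ i < N, ∃ j, j ≤ p ∧ 2^j ∣ σ i ∧ σ (i+1) = σ i + 2^j) ∧
      (∀ j : ℕ, ((Finset.range N).filter (fun i => σ (i+1) - σ i = 2^j)).card ≤ 2) := by
  have hMpos : 0 < 2^p := Nat.pow_pos (by norm_num)
  obtain ⟨c, r, d0, hcb, hbc, hcdvd, hd0M, hr2, hceq, hac⟩ :
      ∃ c r d0, c ≤ b ∧ b < c + 2^p ∧ 2^p ∣ c ∧ d0 < 2^p ∧ r ≤ 2 ∧
        a + d0 + 2^p * r = c ∧ a < c := by
    have hdm := Nat.div_add_mod b (2^p)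
    have hmod : b % 2^p < 2^p := Nat.mod_lt _ hMpos
    have hcb : 2^p * (b / 2^p) ≤ b := by omega
    have hbc : b < 2^p * (b / 2^p) + 2^p := by omega
    have hac : a < 2^p * (b / 2^p) := by omega
    have hdm2 := Nat.div_add_mod (2^p * (b / 2^p) - a) (2^p)
    have hd2M : 2^p * (b / 2^p) - a ≤ 2 * 2^p := by
      have : (2:ℕ)^(p+1) = 2 * 2^p := by rw [pow_succ]; ring
      omega
    refine ⟨2^p * (b / 2^p), (2^p * (b / 2^p) - a) / 2^p, (2^p * (b / 2^p) - a) % 2^p,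
      hcb, hbc, dvd_mul_right _ _, Nat.mod_lt _ hMpos, ?_, by omega, hac⟩
    have h' : (2^p * (b / 2^p) - a) / 2^p ≤ 2 * 2^p / 2^p := Nat.div_le_div_right hd2M
    rwa [Nat.mul_div_cancel _ hMpos] at h'
  have hcMdvd : (2:ℕ)^p ∣ a + d0 := by
    have h' : a + d0 = c - 2^p * r := by omega
    rw [h']; exact Nat.dvd_sub hcdvd (dvd_mul_right _ _)
  obtain ⟨NL, σL, hσL0, hσLN, hLnil, hLstep, hLinc⟩ := dyadicCoreL d0 p a hd0M hcMdvd
  obtain ⟨NR, σR, hR0, hRN, hRnil, hRstep, hRanti⟩ :=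
    dyadicCore (b - c) p c (by omega) hcdvd
  obtain ⟨σM, hσM⟩ : ∃ f : ℕ → ℕ, f = fun i => (a + d0) + 2^p * (i - NL) := ⟨_, rfl⟩
  have mA : σM NL = a + d0 := by rw [hσM]; simp
  have mB : σM (NL + r) = c := by
    rw [hσM]; show a + d0 + 2^p * (NL + r - NL) = c
    rw [show NL + r - NL = r from by omega]; exact hceq
  have mC : ∀ i, NL ≤ i → σM (i+1) = σM i + 2^p := by
    intro i h
    rw [hσM]
    show a + d0 + 2^p * (i + 1 - NL) = a + d0 + 2^p * (i - NL) + 2^p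
    rw [show i + 1 - NL = (i - NL) + 1 from by omega, Nat.mul_succ]
    omega
  have mD : ∀ i, (2:ℕ)^p ∣ σM i := by
    intro i
    rw [hσM]
    exact Nat.dvd_add hcMdvd (dvd_mul_right _ _)
  obtain ⟨σg, hσg⟩ : ∃ f : ℕ → ℕ,
      f = fun i => if i < NL then σL i else if i ≤ NL + r then σM i else σR (i - NL - r) :=
    ⟨_, rfl⟩
  have EL : ∀ i, i ≤ NL → σg i = σL i := by
    intro i hi
    rcases Nat.lt_or_ge i NL with h | h
    · rw [hσg]; simp [h]
    · have hi' : i = NL := by omega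
      subst hi'
      rw [hσg]; simp [hσLN, mA]
  have EM : ∀ i, NL ≤ i → i ≤ NL + r → σg i = σM i := by
    intro i hh1 hh2
    rw [hσg]
    show (if i < NL then σL i else if i ≤ NL + r then σM i else σR (i - NL - r)) = σM i
    rw [if_neg (by omega), if_pos hh2]
  have ER : ∀ i, NL + r ≤ i → σg i = σR (i - NL - r) := by
    intro i hh1
    rcases Nat.eq_or_lt_of_le hh1 with h | h
    · rw [← h, EM (NL + r) (by omega) le_rfl, mB,
        show NL + r - NL - r = 0 from by omega, hR0]
    · rw [hσg]
      show (if i < NL then σL i else if i ≤ NL + r then σM i else σR (i - NL - r))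
        = σR (i - NL - r)
      rw [if_neg (by omega), if_neg (by omega)]
  have hg0 : σg 0 = a := by
    rcases Nat.eq_zero_or_pos NL with h | h
    · have hd00 : d0 = 0 := hLnil h
      rw [EM 0 (by omega) (by omega), hσM]
      show a + d0 + 2^p * (0 - NL) = a
      rw [show (0:ℕ) - NL = 0 from by omega, Nat.mul_zero]
      omega
    · rw [EL 0 (by omega), hσL0]
  have hgN : σg (NL + r + NR) = b := by
    rw [ER _ (by omega), show NL + r + NR - NL - r = NR from by omega, hRN]
    omega
  have hNpos : 0 < NL + r + NR := by
    rcases Nat.eq_zero_or_pos (NL + r + NR) with h | h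
    · exfalso
      have hd00 := hLnil (by omega)
      have he0 := hRnil (by omega)
      have hr0 : r = 0 := by omega
      rw [hr0, Nat.mul_zero] at hceq
      omega
    · exact h
  have SA : ∀ i, i < NL + r + NR → ∃ j, j ≤ p ∧ 2^j ∣ σg i ∧ σg (i+1) = σg i + 2^j := by
    intro i hi
    rcases Nat.lt_or_ge i NL with h | h
    · obtain ⟨j, hj, hdvd, heq⟩ := hLstep i h
      exact ⟨j, hj.le, by rw [EL i h.le]; exact hdvd,
        by rw [EL i h.le, EL (i+1) (by omega)]; exact heq⟩
    · rcases Nat.lt_or_ge i (NL + r) with h' | h'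
      · exact ⟨p, le_rfl, by rw [EM i h (by omega)]; exact mD i,
          by rw [EM i h (by omega), EM (i+1) (by omega) (by omega)]; exact mC i h⟩
      · obtain ⟨j, hj, hdvd, heq⟩ := hRstep (i - NL - r) (by omega)
        refine ⟨j, hj.le, by rw [ER i h']; exact hdvd, ?_⟩
        rw [ER i h', ER (i+1) (by omega), show i + 1 - NL - r = (i - NL - r) + 1 from by omega]
        exact heq
  have F1 : ∀ i, i < NL → σg (i+1) - σg i < 2^p := by
    intro i h
    obtain ⟨j, hj, _, heq⟩ := hLstep i h
    rw [EL (i+1) (by omega), EL i h.le, heq]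
    have : (2:ℕ)^j < 2^p := Nat.pow_lt_pow_right (by norm_num) hj
    omega
  have F2 : ∀ i1 i2, i1 < i2 → i2 < NL →
      σg (i1+1) - σg i1 < σg (i2+1) - σg i2 := by
    intro i1 i2 h12 hh2
    rw [EL (i1+1) (by omega), EL i1 (by omega), EL (i2+1) (by omega), EL i2 (by omega)]
    exact hLinc i1 i2 h12 hh2
  have F3 : ∀ i, NL ≤ i → i < NL + r → σg (i+1) - σg i = 2^p := by
    intro i h h'
    rw [EM i h (by omega), EM (i+1) (by omega) (by omega), mC i h]
    omega
  have F4 : ∀ i, NL + r ≤ i → i < NL + r + NR → σg (i+1) - σg i < 2^p := by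
    intro i h h'
    obtain ⟨j, hj, _, heq⟩ := hRstep (i - NL - r) (by omega)
    rw [ER (i+1) (by omega), ER i h, show i + 1 - NL - r = (i - NL - r) + 1 from by omega, heq]
    have : (2:ℕ)^j < 2^p := Nat.pow_lt_pow_right (by norm_num) hj
    omega
  have F5 : ∀ i1 i2, NL + r ≤ i1 → i1 < i2 → i2 < NL + r + NR →
      σg (i2+1) - σg i2 < σg (i1+1) - σg i1 := by
    intro i1 i2 hh1 h12 hh2
    rw [ER (i1+1) (by omega), ER i1 hh1, ER (i2+1) (by omega), ER i2 (by omega),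
      show i1 + 1 - NL - r = (i1 - NL - r) + 1 from by omega,
      show i2 + 1 - NL - r = (i2 - NL - r) + 1 from by omega]
    exact hRanti (i1 - NL - r) (i2 - NL - r) (by omega) (by omega)
  refine ⟨NL + r + NR, σg, hNpos, hg0, hgN, SA, ?_⟩
  intro j
  by_cases hj : j = p
  · rw [hj]
    calc ((Finset.range (NL + r + NR)).filter (fun i => σg (i+1) - σg i = 2^p)).card
        ≤ (Finset.Ico NL (NL + r)).card := by
          apply Finset.card_le_card
          intro i hi
          simp only [Finset.mem_filter, Finset.mem_range] at hi
          obtain ⟨hiN, hsz⟩ := hi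
          simp only [Finset.mem_Ico]
          constructor
          · by_contra hcc
            push_neg at hcc
            have := F1 i (by omega)
            omega
          · by_contra hcc
            push_neg at hcc
            have := F4 i (by omega) hiN
            omega
      _ = r := by rw [Nat.card_Ico]; omega
      _ ≤ 2 := hr2
  · by_contra hcon
    push_neg at hcon
    obtain ⟨x, y, z, hx, hy, hz, hxy, hxz, hyz⟩ := Finset.two_lt_card_iff.mp hcon
    have hclass : ∀ w, w ∈ (Finset.range (NL + r + NR)).filter
        (fun i => σg (i+1) - σg i = 2^j) → (w < NL ∨ NL + r ≤ w) := by
      intro w hw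
      simp only [Finset.mem_filter, Finset.mem_range] at hw
      obtain ⟨hwN, hsz⟩ := hw
      rcases Nat.lt_or_ge w NL with h | h
      · exact Or.inl h
      · rcases Nat.lt_or_ge w (NL + r) with h' | h'
        · exfalso
          have := F3 w h h'
          exact hj (pow2_inj (by omega))
        · exact Or.inr h'
    have uL : ∀ w1 w2, w1 ∈ (Finset.range (NL + r + NR)).filter
        (fun i => σg (i+1) - σg i = 2^j) → w2 ∈ (Finset.range (NL + r + NR)).filter
        (fun i => σg (i+1) - σg i = 2^j) → w1 < NL → w2 < NL → w1 = w2 := by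
      intro w1 w2 hw1 hw2 hl1 hl2
      simp only [Finset.mem_filter, Finset.mem_range] at hw1 hw2
      by_contra hne
      rcases Nat.lt_or_ge w1 w2 with h | h
      · have := F2 w1 w2 h hl2; omega
      · have := F2 w2 w1 (by omega) hl1; omega
    have uR : ∀ w1 w2, w1 ∈ (Finset.range (NL + r + NR)).filter
        (fun i => σg (i+1) - σg i = 2^j) → w2 ∈ (Finset.range (NL + r + NR)).filter
        (fun i => σg (i+1) - σg i = 2^j) → NL + r ≤ w1 → NL + r ≤ w2 → w1 = w2 := by
      intro w1 w2 hw1 hw2 hl1 hl2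
      simp only [Finset.mem_filter, Finset.mem_range] at hw1 hw2
      by_contra hne
      rcases Nat.lt_or_ge w1 w2 with h | h
      · have := F5 w1 w2 hl1 h (by omega); omega
      · have := F5 w2 w1 hl2 (by omega) (by omega); omega
    rcases hclass x hx with cx | cx <;> rcases hclass y hy with cy | cy <;>
      rcases hclass z hz with cz | cz
    · exact hxy (uL x y hx hy cx cy)
    · exact hxy (uL x y hx hy cx cy)
    · exact hxz (uL x z hx hz cx cz)
    · exact hyz (uR y z hy hz cy cz)
    · exact hyz (uL y z hy hz cy cz)
    · exact hxz (uR x z hx hz cx cz)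
    · exact hxy (uR x y hx hy cx cy)
    · exact hxy (uR x y hx hy cx cy)

/-- Dyadic partition lemma: dyadic rationals `s < t` in `[0,1]` with
`2^{-(m+1)} < t - s ≤ 2^{-m}` admit a partition of `[s,t)` into dyadic
intervals of levels `k ≥ m+1`, with at most two intervals of each level. -/
theorem dyadic_partition_lemma
    (s t : ℝ) (hs0 : 0 ≤ s) (hst : s < t) (ht1 : t ≤ 1)
    (hsdyadic : ∃ k l : ℕ, s = (l : ℝ) / 2 ^ k)
    (htdyadic : ∃ k l : ℕ, t = (l : ℝ) / 2 ^ k)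
    (m : ℕ) (hm1 : ((1 : ℝ) / 2) ^ (m + 1) < t - s)
    (hm2 : t - s ≤ ((1 : ℝ) / 2) ^ m) :
    ∃ (N : ℕ) (τ : ℕ → ℝ), 0 < N ∧ τ 0 = s ∧ τ N = t ∧
      (∀ i < N, τ i < τ (i + 1)) ∧
      (∀ i < N, ∃ (k l : ℕ), m + 1 ≤ k ∧
        τ i = (l : ℝ) / 2 ^ k ∧ τ (i + 1) = ((l : ℝ) + 1) / 2 ^ k) ∧
      (∀ k : ℕ,
        ((range N).filter
          (fun i => τ (i + 1) - τ i = ((1 : ℝ) / 2) ^ k)).card ≤ 2) := by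
  obtain ⟨ks, ls, hseq⟩ := hsdyadic
  obtain ⟨kt, lt', hteq⟩ := htdyadic
  set p := ks + kt with hp
  set n := ks + kt + m + 1 with hn
  set a := ls * 2^(kt + m + 1) with ha
  set b := lt' * 2^(ks + m + 1) with hb
  have h2n : (0:ℝ) < 2^n := by positivity
  have hsa : ((a:ℕ):ℝ) / 2^n = s := by
    rw [hseq, ha, hn]
    push_cast
    rw [div_eq_div_iff (by positivity) (by positivity)]
    ring
  have hta : ((b:ℕ):ℝ) / 2^n = t := by
    rw [hteq, hb, hn]
    push_cast
    rw [div_eq_div_iff (by positivity) (by positivity)]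
    ring
  clear_value a b n p
  have hab : a < b := by
    have h' : (a:ℝ)/2^n < (b:ℝ)/2^n := by rw [hsa, hta]; exact hst
    have : (a:ℝ) < b := by
      rw [div_lt_div_iff₀ h2n h2n] at h'
      exact lt_of_mul_lt_mul_right h' (by positivity)
    exact_mod_cast this
  have hts : t - s = ((b:ℝ) - a)/2^n := by rw [← hsa, ← hta]; ring
  have hpow1 : (2:ℝ)^n = 2^p * 2^(m+1) := by rw [← pow_add]; congr 1; omega
  have hpow2 : (2:ℝ)^n = 2^(p+1) * 2^m := by rw [← pow_add]; congr 1; omega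
  have key1 : (2:ℝ)^p < (b:ℝ) - a := by
    have h := hm1
    rw [hts, div_pow, one_pow, div_lt_div_iff₀ (by positivity) h2n] at h
    rw [one_mul, hpow1] at h
    exact lt_of_mul_lt_mul_right h (by positivity)
  have key2 : (b:ℝ) - a ≤ 2^(p+1) := by
    have h := hm2
    rw [hts, div_pow, one_pow, div_le_div_iff₀ h2n (by positivity)] at h
    rw [one_mul, hpow2] at h
    exact le_of_mul_le_mul_right h (by positivity)
  have h1n : 2^p < b - a := by
    have : ((2^p : ℕ):ℝ) < ((b - a : ℕ):ℝ) := by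
      rw [Nat.cast_sub hab.le]
      push_cast
      exact key1
    exact_mod_cast this
  have h2nn : b - a ≤ 2^(p+1) := by
    have : ((b - a : ℕ):ℝ) ≤ ((2^(p+1) : ℕ):ℝ) := by
      rw [Nat.cast_sub hab.le]
      push_cast
      exact key2
    exact_mod_cast this
  obtain ⟨N, σ, hNpos, hσ0, hσN, SA, hcard⟩ := natPartition a b p h1n h2nn
  have hpn : p + m + 1 = n := by omega
  refine ⟨N, fun i => (σ i : ℝ)/2^n, hNpos, by simp only; rw [hσ0]; exact hsa,
    by simp only; rw [hσN]; exact hta, ?_, ?_, ?_⟩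
  · intro i hi
    obtain ⟨j, hj, _, heq⟩ := SA i hi
    have h2jpos : 0 < 2^j := Nat.pow_pos (by norm_num)
    have hlt : σ i < σ (i+1) := by omega
    have hc : (σ i:ℝ) < σ (i+1) := by exact_mod_cast hlt
    simp only
    rw [div_lt_div_iff₀ h2n h2n]
    exact mul_lt_mul_of_pos_right hc h2n
  · intro i hi
    obtain ⟨j, hj, hdvd, heq⟩ := SA i hi
    have hjn : j ≤ n := by omega
    have hl : ((σ i / 2^j : ℕ):ℝ) * 2^j = (σ i : ℝ) := by
      have h' : (σ i / 2^j) * 2^j = σ i := Nat.div_mul_cancel hdvd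
      exact_mod_cast h'
    have hsplit : (2:ℝ)^n = 2^(n-j) * 2^j := by rw [← pow_add]; congr 1; omega
    refine ⟨n - j, σ i / 2^j, by omega, ?_, ?_⟩
    · simp only
      rw [div_eq_div_iff (by positivity) (by positivity), ← hl, hsplit]
      ring
    · simp only
      rw [heq, div_eq_div_iff (by positivity) (by positivity)]
      push_cast
      rw [← hl, hsplit]
      ring
  · intro k
    refine le_trans (Finset.card_le_card ?_) (hcard (n - k))
    intro i hi
    simp only [Finset.mem_filter, Finset.mem_range] at hi ⊢
    obtain ⟨hiN, heqr⟩ := hi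
    obtain ⟨j, hj, _, heq⟩ := SA i hiN
    have hδ : σ (i+1) - σ i = 2^j := by omega
    have hle : σ i ≤ σ (i+1) := by omega
    have h3 : ((2:ℝ))^j / 2^n = (1/2)^k := by
      rw [← heqr, div_sub_div_same]
      congr 1
      have : ((σ (i+1) - σ i : ℕ):ℝ) = (σ (i+1):ℝ) - (σ i:ℝ) := Nat.cast_sub hle
      rw [← this, hδ]
      push_cast
      ring
    have h4 : (2:ℝ)^(j+k) = 2^n := by
      rw [div_pow, one_pow, div_eq_div_iff (by positivity) (by positivity)] at h3
      rw [pow_add]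
      linarith [h3]
    have h5 : j + k = n := by
      have : (2:ℕ)^(j+k) = 2^n := by exact_mod_cast h4
      exact pow2_inj this
    refine ⟨hiN, ?_⟩
    rw [hδ]
    congr 1
    omega
end

section
/- Let $R(s,t) := \sum_{k\in\mathbb{Z}} a_k e^{-(1+k^2)|t-s|}$ with $a_k = \frac{\sigma^2}{4\pi(1+k^2)}$ denote the temporal covariance (at a fixed spatial point) of the stationary solution of the modified stochastic heat equation. Then there is a constant $c$ (depending only on $\sigma$) such that $E[(\psi_t(x)-\psi_s(x))^2] = 2(R(s,s)-R(s,t)) = \frac{\sigma^2}{2\pi}\sum_{k\in\mathbb{Z}}\frac{1 - e^{-(1+k^2)|t-s|}}{1+k^2} \leq c\,|t-s|^{1/2}$ for all $s,t\geq 0$. -/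
open Real

private lemma inv_quad_nat_summable' (f : ℕ → ℝ) (h0 : ∀ n, 0 ≤ f n)
    (hle : ∀ n, f n ≤ 1 / (1 + (n : ℝ) ^ 2)) : Summable f := by
  apply Summable.of_nonneg_of_le h0 (fun n => (hle n).trans ?_)
    (((summable_nat_add_iff 1).2 (summable_one_div_nat_pow.2 one_lt_two)).mul_left 2)
  have hn : (0:ℝ) ≤ (n:ℝ) := n.cast_nonneg
  rw [mul_one_div, div_le_div_iff₀ (by positivity) (by positivity)]
  push_cast
  nlinarith [sq_nonneg ((n:ℝ) - 1)]

private lemma inv_quad_int_summable (f : ℤ → ℝ) (h0 : ∀ k, 0 ≤ f k)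
    (hle : ∀ k, f k ≤ 1 / (1 + (k : ℝ) ^ 2)) : Summable f := by
  apply Summable.of_nat_of_neg_add_one
  · exact inv_quad_nat_summable' _ (fun n => h0 n) (fun n => by
      simpa using hle (n : ℤ))
  · apply inv_quad_nat_summable' _ (fun n => h0 _) (fun n => ?_)
    refine (hle (-(n+1))).trans ?_
    have hn : (0:ℝ) ≤ (n:ℝ) := n.cast_nonneg
    rw [div_le_div_iff₀ (by positivity) (by positivity)]
    push_cast
    nlinarith

private lemma tail_bound (M : ℕ) (hM : 1 ≤ M) :
    ∑' n : ℕ, 1 / (1 + ((n + M : ℕ) : ℝ) ^ 2) ≤ 2 / (M : ℝ) := by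
  have hM' : (1:ℝ) ≤ (M:ℝ) := by exact_mod_cast hM
  apply Real.tsum_le_of_sum_range_le (fun n => by positivity)
  intro K
  calc ∑ n ∈ Finset.range K, 1 / (1 + ((n + M : ℕ) : ℝ) ^ 2)
      ≤ ∑ n ∈ Finset.range K, ((fun i : ℕ => 2 / ((i:ℝ) + M)) n
          - (fun i : ℕ => 2 / ((i:ℝ) + M)) (n + 1)) := by
        apply Finset.sum_le_sum
        intro i _
        have hi : (0:ℝ) ≤ (i:ℝ) := i.cast_nonneg
        simp only
        have heq : 2 / ((i:ℝ) + M) - 2 / (((i+1:ℕ):ℝ) + M)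
            = 2 / (((i:ℝ) + M) * ((i:ℝ) + M + 1)) := by
          push_cast
          field_simp
          ring
        rw [heq, div_le_div_iff₀ (by positivity) (by positivity)]
        push_cast
        nlinarith
    _ = 2 / (((0:ℕ):ℝ) + M) - 2 / ((K:ℝ) + M) :=
        Finset.sum_range_sub' (fun i : ℕ => 2 / ((i:ℝ) + M)) K
    _ ≤ 2 / M := by
        have : (0:ℝ) ≤ 2 / ((K:ℝ) + M) := by positivity
        simp only [Nat.cast_zero, zero_add]
        linarith

private lemma min_summable (h : ℝ) (hh : 0 ≤ h) :
    Summable (fun n : ℕ => min h (1 / (1 + (n : ℝ) ^ 2))) :=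
  inv_quad_nat_summable' _ (fun n => le_min hh (by positivity)) (fun n => min_le_right _ _)

private lemma nat_key (h : ℝ) (hh : 0 ≤ h) :
    ∑' n : ℕ, min h (1 / (1 + (n : ℝ) ^ 2)) ≤ 4 * Real.sqrt h := by
  rcases eq_or_lt_of_le hh with heq | hpos
  · rw [← heq]
    have hz : (fun n : ℕ => min (0:ℝ) (1 / (1 + (n:ℝ) ^ 2))) = fun _ => 0 :=
      funext fun n => min_eq_left (by positivity)
    rw [hz, tsum_zero]
    simp
  set g : ℕ → ℝ := fun n => min h (1 / (1 + (n : ℝ) ^ 2)) with hg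
  have hgs : Summable g := min_summable h hh
  set s := Real.sqrt h with hsdef
  have hs : 0 < s := Real.sqrt_pos.2 hpos
  have hs2 : s * s = h := Real.mul_self_sqrt hh
  set M : ℕ := ⌈1 / s⌉₊ with hMdef
  have hM1 : 1 ≤ M := Nat.one_le_iff_ne_zero.2 (by
    simp only [hMdef, ne_eq, Nat.ceil_eq_zero, not_le]
    positivity)
  have hMs : 1 / s ≤ (M : ℝ) := Nat.le_ceil _
  have hMpos : (0:ℝ) < M := lt_of_lt_of_le (by positivity) hMs
  -- tail bound
  have htail : ∑' n : ℕ, g (n + M) ≤ 2 * s := by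
    have h1 : ∑' n : ℕ, g (n + M) ≤ ∑' n : ℕ, 1 / (1 + ((n + M : ℕ) : ℝ) ^ 2) := by
      refine Summable.tsum_le_tsum (fun n => min_le_right _ _)
        ((summable_nat_add_iff M).2 hgs)
        (inv_quad_nat_summable' _ (fun n => by positivity) (fun n => ?_))
      apply one_div_le_one_div_of_le (by positivity)
      have h3 : (n:ℝ) ≤ ((n + M : ℕ) : ℝ) := by exact_mod_cast Nat.le_add_right n M
      have h4 : (0:ℝ) ≤ (n:ℝ) := n.cast_nonneg
      nlinarith
    refine h1.trans ((tail_bound M hM1).trans ?_)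
    rw [div_le_iff₀ hMpos]
    calc (2:ℝ) = (1/s) * (2 * s) := by field_simp
    _ ≤ (M:ℝ) * (2*s) := by gcongr
    _ = 2 * s * M := by ring
  have hsplit := (Summable.sum_add_tsum_nat_add M hgs).symm
  rcases le_or_gt h 1 with hle1 | hgt1
  · have hsle : s ≤ 1 := by
      rw [hsdef, show (1:ℝ) = Real.sqrt 1 by simp]
      exact Real.sqrt_le_sqrt hle1
    have hhead : ∑ n ∈ Finset.range M, g n ≤ 2 * s := by
      calc ∑ n ∈ Finset.range M, g n ≤ ∑ n ∈ Finset.range M, h :=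
            Finset.sum_le_sum (fun n _ => min_le_left _ _)
        _ = M * h := by simp [mul_comm]
        _ ≤ (1/s + 1) * h := by
            gcongr
            exact (Nat.ceil_lt_add_one (by positivity)).le
        _ = s + h := by field_simp; nlinarith
        _ ≤ 2 * s := by nlinarith
    calc ∑' n, g n = ∑ n ∈ Finset.range M, g n + ∑' n : ℕ, g (n + M) := hsplit
      _ ≤ 2 * s + 2 * s := add_le_add hhead htail
      _ = 4 * s := by ring
  · -- h > 1 : M = 1
    have hs1 : 1 ≤ s := by
      rw [hsdef, show (1:ℝ) = Real.sqrt 1 by simp]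
      exact Real.sqrt_le_sqrt hgt1.le
    have hM' : M = 1 := by
      have h5 : 1/s ≤ ((1:ℕ):ℝ) := by
        rw [Nat.cast_one, div_le_one hs]; exact hs1
      have h6 : M ≤ 1 := Nat.ceil_le.2 h5
      omega
    have hhead : ∑ n ∈ Finset.range M, g n ≤ s := by
      rw [hM', Finset.sum_range_one]
      have hg0 : g 0 ≤ 1 := by simp [hg]
      linarith
    calc ∑' n, g n = ∑ n ∈ Finset.range M, g n + ∑' n : ℕ, g (n + M) := hsplit
      _ ≤ s + 2 * s := add_le_add hhead htail
      _ ≤ 4 * s := by linarith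

private lemma int_key (h : ℝ) (hh : 0 ≤ h) :
    ∑' k : ℤ, (1 - Real.exp (-(1 + (k : ℝ) ^ 2) * h)) / (1 + (k : ℝ) ^ 2)
      ≤ 8 * Real.sqrt h := by
  set f : ℤ → ℝ :=
    fun k => (1 - Real.exp (-(1 + (k : ℝ) ^ 2) * h)) / (1 + (k : ℝ) ^ 2) with hf
  have hnum : ∀ x : ℝ, 0 < x →
      0 ≤ 1 - Real.exp (-x * h) ∧ 1 - Real.exp (-x * h) ≤ x * h ∧
        1 - Real.exp (-x * h) ≤ 1 := by
    intro x hx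
    have h1 := Real.add_one_le_exp (-(x * h))
    have h2 : Real.exp (-(x * h)) ≤ 1 := Real.exp_le_one_iff.mpr (by nlinarith)
    have h3 := Real.exp_pos (-(x * h))
    refine ⟨by rw [neg_mul]; linarith, by rw [neg_mul]; linarith, by rw [neg_mul]; linarith⟩
  have hmin : ∀ k : ℤ, f k ≤ min h (1 / (1 + (k : ℝ) ^ 2)) := by
    intro k
    have hx : (0:ℝ) < 1 + (k:ℝ) ^ 2 := by positivity
    obtain ⟨a, b, c⟩ := hnum _ hx
    refine le_min ?_ ?_
    · rw [hf, div_le_iff₀ hx]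
      nlinarith
    · exact div_le_div₀ zero_le_one c hx le_rfl
  have h0 : ∀ k : ℤ, 0 ≤ f k := by
    intro k
    have hx : (0:ℝ) < 1 + (k:ℝ) ^ 2 := by positivity
    exact div_nonneg (hnum _ hx).1 hx.le
  have hfs : Summable f :=
    inv_quad_int_summable f h0 (fun k => (hmin k).trans (min_le_right _ _))
  have hnat : Summable (fun n : ℕ => f n) :=
    hfs.comp_injective Nat.cast_injective
  have hinj : Function.Injective (fun n : ℕ => -((n : ℤ) + 1)) := by
    intro a b hab
    simp only at hab
    omega
  have hneg : Summable (fun n : ℕ => f (-((n : ℤ) + 1))) :=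
    hfs.comp_injective hinj
  have hmins : Summable (fun n : ℕ => min h (1 / (1 + (n : ℝ) ^ 2))) :=
    min_summable h hh
  have b1 : ∑' n : ℕ, f n ≤ ∑' n : ℕ, min h (1 / (1 + (n : ℝ) ^ 2)) := by
    refine Summable.tsum_le_tsum (fun n => ?_) hnat hmins
    simpa using hmin (n : ℤ)
  have b2 : ∑' n : ℕ, f (-((n : ℤ) + 1)) ≤ ∑' n : ℕ, min h (1 / (1 + (n : ℝ) ^ 2)) := by
    refine Summable.tsum_le_tsum (fun n => ?_) hneg hmins
    refine (hmin _).trans (min_le_min le_rfl ?_)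
    apply one_div_le_one_div_of_le (by positivity)
    have h4 : (0:ℝ) ≤ (n:ℝ) := n.cast_nonneg
    push_cast
    nlinarith
  rw [show (∑' k : ℤ, (1 - Real.exp (-(1 + (k : ℝ) ^ 2) * h)) / (1 + (k : ℝ) ^ 2))
      = ∑' k : ℤ, f k from rfl, tsum_of_nat_of_neg_add_one hnat hneg]
  have hk := nat_key h hh
  linarith

/-- Temporal covariance of the stationary solution of the modified stochastic
heat equation: `2(R(s,s) - R(s,t)) = σ²/(2π) Σ_k (1 - e^{-(1+k²)|t-s|})/(1+k²)`
and this is bounded by `c |t-s|^{1/2}` with `c` depending only on `σ`. -/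
theorem heat_equation_temporal_regularity
    (σ : ℝ) (hσ : 0 < σ) (R : ℝ → ℝ → ℝ)
    (hR : ∀ s t : ℝ, R s t =
      ∑' k : ℤ, σ ^ 2 / (4 * π * (1 + (k : ℝ) ^ 2)) *
        Real.exp (-(1 + (k : ℝ) ^ 2) * |t - s|)) :
    ∃ c : ℝ, 0 < c ∧ ∀ s t : ℝ, 0 ≤ s → 0 ≤ t →
      (2 * (R s s - R s t) =
        σ ^ 2 / (2 * π) *
          ∑' k : ℤ, (1 - Real.exp (-(1 + (k : ℝ) ^ 2) * |t - s|)) /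
            (1 + (k : ℝ) ^ 2)) ∧
      2 * (R s s - R s t) ≤ c * |t - s| ^ ((1 : ℝ) / 2) := by
  have hpi : (0:ℝ) < π := Real.pi_pos
  have hπ : (π:ℝ) ≠ 0 := ne_of_gt hpi
  have key : ∀ s t : ℝ, 2 * (R s s - R s t) =
      σ ^ 2 / (2 * π) *
        ∑' k : ℤ, (1 - Real.exp (-(1 + (k : ℝ) ^ 2) * |t - s|)) /
          (1 + (k : ℝ) ^ 2) := by
    intro s t
    have hh : (0:ℝ) ≤ |t - s| := abs_nonneg _
    have hbase : Summable (fun k : ℤ => 1 / (1 + (k:ℝ) ^ 2)) :=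
      inv_quad_int_summable _ (fun k => by positivity) (fun k => le_rfl)
    have ha : Summable (fun k : ℤ => σ ^ 2 / (4 * π * (1 + (k:ℝ) ^ 2))) := by
      refine (hbase.mul_left (σ ^ 2 / (4 * π))).congr fun k => ?_
      have : (1:ℝ) + (k:ℝ) ^ 2 ≠ 0 := by positivity
      field_simp
    have hae : Summable (fun k : ℤ => σ ^ 2 / (4 * π * (1 + (k:ℝ) ^ 2)) *
        Real.exp (-(1 + (k:ℝ) ^ 2) * |t - s|)) := by
      refine Summable.of_nonneg_of_le (fun k => by positivity) (fun k => ?_) ha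
      have he1 : Real.exp (-(1 + (k:ℝ) ^ 2) * |t - s|) ≤ 1 :=
        Real.exp_le_one_iff.mpr (by nlinarith [sq_nonneg ((k:ℝ))])
      have hap : (0:ℝ) ≤ σ ^ 2 / (4 * π * (1 + (k:ℝ) ^ 2)) := by positivity
      exact mul_le_of_le_one_right hap he1
    have hRss : R s s = ∑' k : ℤ, σ ^ 2 / (4 * π * (1 + (k:ℝ) ^ 2)) := by
      rw [hR s s]
      congr 1
      funext k
      simp
    rw [hRss, hR s t]
    calc 2 * ((∑' k : ℤ, σ ^ 2 / (4 * π * (1 + (k:ℝ) ^ 2))) -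
          ∑' k : ℤ, σ ^ 2 / (4 * π * (1 + (k:ℝ) ^ 2)) *
            Real.exp (-(1 + (k:ℝ) ^ 2) * |t - s|))
        = ∑' k : ℤ, 2 * (σ ^ 2 / (4 * π * (1 + (k:ℝ) ^ 2)) -
            σ ^ 2 / (4 * π * (1 + (k:ℝ) ^ 2)) *
              Real.exp (-(1 + (k:ℝ) ^ 2) * |t - s|)) := by
          rw [← Summable.tsum_sub ha hae, ← tsum_mul_left]
      _ = σ ^ 2 / (2 * π) *
          ∑' k : ℤ, (1 - Real.exp (-(1 + (k:ℝ) ^ 2) * |t - s|)) /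
            (1 + (k:ℝ) ^ 2) := by
          rw [← tsum_mul_left]
          refine tsum_congr fun k => ?_
          have hx : (1:ℝ) + (k:ℝ) ^ 2 ≠ 0 := by positivity
          field_simp
          ring
  refine ⟨σ ^ 2 / (2 * π) * 8,
    mul_pos (div_pos (pow_pos hσ 2) (by positivity)) (by norm_num),
    fun s t hs ht => ⟨key s t, ?_⟩⟩
  rw [key s t]
  have hh : (0:ℝ) ≤ |t - s| := abs_nonneg _
  have hT := int_key |t - s| hh
  have hc : (0:ℝ) ≤ σ ^ 2 / (2 * π) := by positivity
  calc σ ^ 2 / (2 * π) *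
        ∑' k : ℤ, (1 - Real.exp (-(1 + (k:ℝ) ^ 2) * |t - s|)) / (1 + (k:ℝ) ^ 2)
      ≤ σ ^ 2 / (2 * π) * (8 * Real.sqrt |t - s|) := by
        exact mul_le_mul_of_nonneg_left hT hc
    _ = σ ^ 2 / (2 * π) * 8 * |t - s| ^ ((1:ℝ)/2) := by
        rw [← Real.sqrt_eq_rpow]
        ring
end
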